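/- arXiv:1905.04956 — 3 statements merged into one kernel-verified Lean document; each statement's English description precedes it below -/
import Mathlib

section
/- Consider a FIFO system with cumulative input I and cumulative output O (both wide-sense increasing functions from [0,∞) to [0,∞) with O ≤ I) that offers a service curve β, meaning: for every t ≥ 0 there exists s ∈ [0,t] with O(t) ≥ I(s) + β(t−s), where β is wide-sense increasing with β(0) = 0. Suppose packets arrive at times A_1 ≤ A_2 ≤ ... with lengths l_1, l_2, ... > 0 (packetized input: I(t) = Σ_{i : A_i < t} l_i), and packet n starts transmission at time Q_n ≥ A_n with O(Q_n) = Σ_{i=1}^{n−1} l_i. Then there exists an index m ≤ n such that β(Q_n − A_m) ≤ Σ_{k=m}^{n−1} l_k. -/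
/-!
Take the instant `s ≤ Q n` given by the service curve at `t = Q n`, so that
`I s + β (Q n - s) ≤ O (Q n) = l 0 + ⋯ + l (n-1)`. Packets `0, …, n` cannot all have arrived
before `s`, since then `I s` alone would exceed that sum. Let `m ≤ n` be the first packet with
`s ≤ A m`; packets `0, …, m-1` arrived before `s`, and monotonicity of `β` gives
`β (Q n - A m) ≤ β (Q n - s) ≤ O (Q n) - I s ≤ l m + ⋯ + l (n-1)`.
-/

open Finset

lemma sum_range_le_sum_filter_lt {N m : ℕ} {A l : ℕ → ℝ} {s : ℝ} (hl : ∀ i, 0 ≤ l i)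
    (hmN : m ≤ N) (hA : ∀ i < m, A i < s) :
    ∑ i ∈ range m, l i ≤ ∑ i ∈ (range N).filter (fun i => A i < s), l i := by
  refine sum_le_sum_of_subset_of_nonneg (fun i hi => ?_) fun i _ _ => hl i
  rw [mem_range] at hi
  exact mem_filter.2 ⟨mem_range.2 (hi.trans_le hmN), hA i hi⟩

lemma exists_le_arrival_of_sum_filter_lt_le {N n : ℕ} {A l : ℕ → ℝ} {s : ℝ}
    (hl : ∀ i, 0 < l i) (hn : n < N)
    (hs : ∑ i ∈ (range N).filter (fun i => A i < s), l i ≤ ∑ i ∈ range n, l i) :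
    ∃ m ≤ n, s ≤ A m := by
  by_contra! h
  have hle := sum_range_le_sum_filter_lt (fun i => (hl i).le) hn
    fun i hi => h i (Nat.lt_succ_iff.mp hi)
  rw [sum_range_succ] at hle
  linarith [hl n]

theorem stmt4_general (N : ℕ) (A l Q : ℕ → ℝ) (I O : ℝ → ℝ) (β : ℝ → ℝ)
    (hβmono : MonotoneOn β (Set.Ici 0))
    (hβnn : ∀ t : ℝ, 0 ≤ t → 0 ≤ β t)
    (hAmono : ∀ i j, i ≤ j → A i ≤ A j) (hAnn : ∀ i, 0 ≤ A i)
    (hl : ∀ i, 0 < l i)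
    (hI : ∀ t : ℝ, I t = ∑ i ∈ (Finset.range N).filter (fun i => A i < t), l i)
    (hSC : ∀ t : ℝ, 0 ≤ t → ∃ s : ℝ, 0 ≤ s ∧ s ≤ t ∧ I s + β (t - s) ≤ O t)
    (n : ℕ) (hn : n < N) (hQ : A n ≤ Q n)
    (hO : O (Q n) = ∑ i ∈ Finset.range n, l i) :
    ∃ m : ℕ, m ≤ n ∧ β (Q n - A m) ≤ ∑ k ∈ Finset.Ico m n, l k := by
  obtain ⟨s, -, hsQ, hsc⟩ := hSC (Q n) ((hAnn n).trans hQ)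
  have hIs : I s ≤ ∑ i ∈ range n, l i := by linarith [hβnn (Q n - s) (sub_nonneg.2 hsQ)]
  rw [hI] at hIs
  have hex := exists_le_arrival_of_sum_filter_lt_le hl hn hIs
  set m := Nat.find hex
  obtain ⟨hmn, hsAm⟩ : m ≤ n ∧ s ≤ A m := Nat.find_spec hex
  have hArrived : ∑ i ∈ range m, l i ≤ I s := by
    rw [hI]
    refine sum_range_le_sum_filter_lt (fun i => (hl i).le) (hmn.trans hn.le) fun i hi => ?_
    by_contra! hAi
    exact Nat.find_min hex hi ⟨(hi.trans_le hmn).le, hAi⟩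
  refine ⟨m, hmn, ?_⟩
  have hAmQ : A m ≤ Q n := (hAmono m n hmn).trans hQ
  calc β (Q n - A m) ≤ β (Q n - s) :=
        hβmono (sub_nonneg.2 hAmQ) (sub_nonneg.2 hsQ) (by linarith)
    _ ≤ ∑ i ∈ range n, l i - ∑ i ∈ range m, l i := by linarith
    _ = ∑ k ∈ Ico m n, l k := (sum_Ico_eq_sub _ hmn).symm

/-- In a FIFO system with monotone cumulative input `I` and output `O`
(`O ≤ I`) offering service curve `β` (monotone, `β 0 = 0`), with packetized input
(finitely many packets, indexed `0, …, N−1` in order of nondecreasing arrival times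
`A i ≥ 0`, positive lengths `l i`, `I t = Σ_{i : A i < t} l i`), if packet `n` starts
transmission at `Q n ≥ A n` with `O (Q n) = Σ_{i<n} l i`, then there exists `m ≤ n`
with `β (Q n − A m) ≤ Σ_{k=m}^{n−1} l k`. -/
theorem stmt4 (N : ℕ) (A l Q : ℕ → ℝ) (I O : ℝ → ℝ) (β : ℝ → ℝ)
    (hImono : MonotoneOn I (Set.Ici 0)) (hOmono : MonotoneOn O (Set.Ici 0))
    (hOI : ∀ t : ℝ, 0 ≤ t → O t ≤ I t)
    (hβmono : MonotoneOn β (Set.Ici 0)) (hβ0 : β 0 = 0)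
    (hβnn : ∀ t : ℝ, 0 ≤ t → 0 ≤ β t)
    (hAmono : ∀ i j, i ≤ j → A i ≤ A j) (hAnn : ∀ i, 0 ≤ A i)
    (hl : ∀ i, 0 < l i)
    (hI : ∀ t : ℝ, I t = ∑ i ∈ (Finset.range N).filter (fun i => A i < t), l i)
    (hSC : ∀ t : ℝ, 0 ≤ t → ∃ s : ℝ, 0 ≤ s ∧ s ≤ t ∧ I s + β (t - s) ≤ O t)
    (n : ℕ) (hn : n < N) (hQ : A n ≤ Q n)
    (hO : O (Q n) = ∑ i ∈ Finset.range n, l i) :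
    ∃ m : ℕ, m ≤ n ∧ β (Q n - A m) ≤ ∑ k ∈ Finset.Ico m n, l k :=
  stmt4_general N A l Q I O β hβmono hβnn hAmono hAnn hl hI hSC n hn hQ hO
end

section
/- Suppose for a packet n with length l there exists m ≤ n such that R·max(0, (Q_n − A_m) − T) ≤ Σ_{k=m}^{n−1} l_k, and suppose the arrival-curve constraint Σ_{k=m}^{n} l_k ≤ α⁺(A_n − A_m) holds for all m ≤ n, where α⁺ is the right-limit of a monotone function α. Then Q_n − A_n ≤ T − l/R + (1/R)·sup_{t≥0}(α(t) − R·t), and consequently the departure time D_n = Q_n + l/c satisfies D_n − A_n ≤ Δ − l·(1/R − 1/c), where Δ = T + sup_{t≥0}(α(t)/R − t). -/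
/-!
With `S = sup_{t ≥ 0} (α t − R t)` we have `α u ≤ S + R u` for all `u ≥ 0`; passing to the
right limit, `α⁺ t ≤ S + R t`. For the index `m` of the busy-period hypothesis, the
arrival-curve constraint then bounds the work `Σ_{k=m}^{n-1} l_k = Σ_{k=m}^{n} l_k − l_n` by
`S + R (A_n − A_m) − l_n`, which rearranges to the waiting-time bound. The delay bound
follows because `sup (α/R − id) = S / R` and `l/c ≤ l/R`.
-/

open Filter Topology Pointwise

lemma le_sSup_sub_mul_add_of_tendsto_nhdsGT {α : ℝ → ℝ} {R t a : ℝ} (ht : 0 ≤ t)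
    (hbdd : BddAbove {y : ℝ | ∃ t : ℝ, 0 ≤ t ∧ y = α t - R * t})
    (hlim : Tendsto α (𝓝[>] t) (𝓝 a)) :
    a ≤ sSup {y : ℝ | ∃ t : ℝ, 0 ≤ t ∧ y = α t - R * t} + R * t := by
  set S := sSup {y : ℝ | ∃ t : ℝ, 0 ≤ t ∧ y = α t - R * t}
  have hline : Tendsto (fun u => S + R * u) (𝓝[>] t) (𝓝 (S + R * t)) :=
    ((continuous_const.add (continuous_const.mul continuous_id)).tendsto t).mono_left
      nhdsWithin_le_nhds
  refine le_of_tendsto_of_tendsto hlim hline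
    (eventually_nhdsWithin_of_forall fun u (hu : t < u) => ?_)
  have := le_csSup hbdd ⟨u, ht.trans hu.le, rfl⟩
  linarith

lemma sSup_div_sub_eq_sSup_sub_mul_div {α : ℝ → ℝ} {R : ℝ} (hR : 0 < R) :
    sSup {y : ℝ | ∃ t : ℝ, 0 ≤ t ∧ y = α t / R - t} =
      sSup {y : ℝ | ∃ t : ℝ, 0 ≤ t ∧ y = α t - R * t} / R := by
  have hset : {y : ℝ | ∃ t : ℝ, 0 ≤ t ∧ y = α t / R - t} =
      R⁻¹ • {y : ℝ | ∃ t : ℝ, 0 ≤ t ∧ y = α t - R * t} := by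
    ext y
    simp only [Set.mem_smul_set, Set.mem_ofPred_eq, smul_eq_mul]
    constructor
    · rintro ⟨t, ht, rfl⟩
      exact ⟨_, ⟨t, ht, rfl⟩, by field_simp⟩
    · rintro ⟨_, ⟨t, ht, rfl⟩, rfl⟩
      exact ⟨t, ht, by field_simp⟩
  rw [hset, Real.sSup_smul_of_nonneg (inv_nonneg.2 hR.le), smul_eq_mul, inv_mul_eq_div]

lemma sub_le_of_mul_max_le_sum_Ico {R T S Q : ℝ} {A l : ℕ → ℝ} {m n : ℕ} (hR : 0 < R)
    (hmn : m ≤ n) (hbusy : R * max 0 ((Q - A m) - T) ≤ ∑ k ∈ Finset.Ico m n, l k)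
    (harr : ∑ k ∈ Finset.Icc m n, l k ≤ S + R * (A n - A m)) :
    Q - A n ≤ T - l n / R + (1 / R) * S := by
  rw [← Finset.Ico_add_one_right_eq_Icc, Finset.sum_Ico_succ_top hmn] at harr
  have hwork : R * ((Q - A m) - T) ≤ S + R * (A n - A m) - l n :=
    calc R * ((Q - A m) - T) ≤ R * max 0 ((Q - A m) - T) := by gcongr; exact le_max_right _ _
      _ ≤ S + R * (A n - A m) - l n := by linarith
  field_simp
  linarith

theorem stmt5_general (R c T : ℝ) (hR : 0 < R) (hc : R ≤ c)
    (α αp : ℝ → ℝ)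
    (hαp : ∀ t : ℝ, 0 ≤ t →
      Filter.Tendsto α (nhdsWithin t (Set.Ioi t)) (nhds (αp t)))
    (hbdd : BddAbove {y : ℝ | ∃ t : ℝ, 0 ≤ t ∧ y = α t - R * t})
    (A l : ℕ → ℝ) (n : ℕ)
    (hAmono : ∀ i j, i ≤ j → A i ≤ A j)
    (hl : ∀ i, 0 < l i)
    (Q D : ℝ) (hD : D = Q + l n / c)
    (h1 : ∃ m : ℕ, m ≤ n ∧
      R * max 0 ((Q - A m) - T) ≤ ∑ k ∈ Finset.Ico m n, l k)
    (h2 : ∀ m : ℕ, m ≤ n → ∑ k ∈ Finset.Icc m n, l k ≤ αp (A n - A m)) :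
    Q - A n ≤ T - l n / R
        + (1 / R) * sSup {y : ℝ | ∃ t : ℝ, 0 ≤ t ∧ y = α t - R * t} ∧
      D - A n ≤ (T + sSup {y : ℝ | ∃ t : ℝ, 0 ≤ t ∧ y = α t / R - t})
        - l n * (1 / R - 1 / c) := by
  obtain ⟨m, hmn, hbusy⟩ := h1
  have hgap : 0 ≤ A n - A m := sub_nonneg.2 (hAmono m n hmn)
  have hwait := sub_le_of_mul_max_le_sum_Ico hR hmn hbusy <| (h2 m hmn).trans <|
    le_sSup_sub_mul_add_of_tendsto_nhdsGT hgap hbdd (hαp _ hgap)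
  refine ⟨hwait, ?_⟩
  have htx : l n / c ≤ l n / R := div_le_div_of_nonneg_left (hl n).le hR hc
  rw [one_div_mul_eq_div] at hwait
  rw [sSup_div_sub_eq_sSup_sub_mul_div hR, hD]
  linarith [mul_sub (l n) (1 / R) (1 / c), mul_one_div (l n) R, mul_one_div (l n) c]

/-- If for packet `n` (of length `l n`) there is `m ≤ n` with
`R·max(0, (Qₙ − Aₘ) − T) ≤ Σ_{k=m}^{n−1} l k`, and the max-plus arrival-curve
constraint `Σ_{k=m}^{n} l k ≤ α⁺(Aₙ − Aₘ)` holds for all `m ≤ n`, then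
`Qₙ − Aₙ ≤ T − l n / R + (1/R)·sup_{t≥0}(α t − R t)` and the departure time
`Dₙ = Qₙ + l n / c` satisfies `Dₙ − Aₙ ≤ Δ − l n·(1/R − 1/c)` where
`Δ = T + sup_{t≥0}(α t / R − t)`. -/
theorem stmt5 (R c T : ℝ) (hR : 0 < R) (hc : R ≤ c) (hT : 0 ≤ T)
    (α αp : ℝ → ℝ) (hα : MonotoneOn α (Set.Ici 0))
    (hαp : ∀ t : ℝ, 0 ≤ t →
      Filter.Tendsto α (nhdsWithin t (Set.Ioi t)) (nhds (αp t)))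
    (hbdd : BddAbove {y : ℝ | ∃ t : ℝ, 0 ≤ t ∧ y = α t - R * t})
    (A l : ℕ → ℝ) (n : ℕ)
    (hAmono : ∀ i j, i ≤ j → A i ≤ A j) (hAnn : ∀ i, 0 ≤ A i)
    (hl : ∀ i, 0 < l i)
    (Q D : ℝ) (hQA : A n ≤ Q) (hD : D = Q + l n / c)
    (h1 : ∃ m : ℕ, m ≤ n ∧
      R * max 0 ((Q - A m) - T) ≤ ∑ k ∈ Finset.Ico m n, l k)
    (h2 : ∀ m : ℕ, m ≤ n → ∑ k ∈ Finset.Icc m n, l k ≤ αp (A n - A m)) :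
    Q - A n ≤ T - l n / R
        + (1 / R) * sSup {y : ℝ | ∃ t : ℝ, 0 ≤ t ∧ y = α t - R * t} ∧
      D - A n ≤ (T + sSup {y : ℝ | ∃ t : ℝ, 0 ≤ t ∧ y = α t / R - t})
        - l n * (1 / R - 1 / c) :=
  stmt5_general R c T hR hc α αp hαp hbdd A l n hAmono hl Q D hD h1 h2
end

section
/- Suppose sup_{t ≥ 0}(α(t) − R·t) = K < ∞ where α is monotone and R > 0, and let l ≥ 0. Then sup_{t ≥ 0}( (α⁺(t) − l)/R − t ) = (K − l)/R, where α⁺ is the right-limit of α. -/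
/-- If `K = sup_{t≥0}(α t − R t)` is finite (`α` monotone, `R > 0`)
and `l ≥ 0`, then `sup_{t≥0}((α⁺ t − l)/R − t) = (K − l)/R`, where `α⁺` is the
right-limit of `α`. -/
theorem stmt17 (α αp : ℝ → ℝ) (hmono : MonotoneOn α (Set.Ici 0))
    (hαp : ∀ t : ℝ, 0 ≤ t →
      Filter.Tendsto α (nhdsWithin t (Set.Ioi t)) (nhds (αp t)))
    (R l K : ℝ) (hR : 0 < R) (hl : 0 ≤ l)
    (hbdd : BddAbove {y : ℝ | ∃ t : ℝ, 0 ≤ t ∧ y = α t - R * t})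
    (hK : sSup {y : ℝ | ∃ t : ℝ, 0 ≤ t ∧ y = α t - R * t} = K) :
    sSup {y : ℝ | ∃ t : ℝ, 0 ≤ t ∧ y = (αp t - l) / R - t} = (K - l) / R := by
  have hKs : ∀ s : ℝ, 0 ≤ s → α s - R * s ≤ K := by
    intro s hs; rw [← hK]; exact le_csSup hbdd ⟨s, hs, rfl⟩
  have hαpK : ∀ t : ℝ, 0 ≤ t → αp t ≤ K + R * t := by
    intro t ht
    have h1 : Filter.Tendsto (fun s => K + R * s) (nhdsWithin t (Set.Ioi t))
        (nhds (K + R * t)) :=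
      (Filter.Tendsto.const_add K
        ((continuous_const.mul continuous_id).tendsto t)).mono_left
        nhdsWithin_le_nhds
    refine le_of_tendsto_of_tendsto (hαp t ht) h1 ?_
    filter_upwards [self_mem_nhdsWithin] with s hs
    linarith [hKs s (le_trans ht hs.le)]
  have hle : ∀ t : ℝ, 0 ≤ t → α t ≤ αp t := by
    intro t ht
    refine ge_of_tendsto (hαp t ht) ?_
    filter_upwards [self_mem_nhdsWithin] with s hs
    exact hmono ht (le_trans ht hs.le) hs.le
  set S := {y : ℝ | ∃ t : ℝ, 0 ≤ t ∧ y = (αp t - l) / R - t} with hS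
  have hSne : S.Nonempty := ⟨(αp 0 - l) / R - 0, 0, le_refl 0, rfl⟩
  have hSub : ∀ y ∈ S, y ≤ (K - l) / R := by
    rintro y ⟨t, ht, rfl⟩
    have h2 : (αp t - l) / R - t = (αp t - R * t - l) / R := by
      field_simp
      ring
    rw [h2, div_le_div_iff_of_pos_right hR]
    linarith [hαpK t ht]
  have hbddS : BddAbove S := ⟨(K - l) / R, hSub⟩
  refine le_antisymm (csSup_le hSne hSub) ?_
  have hKle : K ≤ R * sSup S + l := by
    rw [← hK]
    refine csSup_le ⟨α 0 - R * 0, 0, le_refl 0, rfl⟩ ?_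
    rintro y ⟨t, ht, rfl⟩
    have h3 : (αp t - l) / R - t ≤ sSup S := le_csSup hbddS ⟨t, ht, rfl⟩
    have h4 : (α t - l) / R - t ≤ (αp t - l) / R - t := by
      gcongr
      exact hle t ht
    have h5 : (α t - l) / R - t ≤ sSup S := le_trans h4 h3
    have h6 : α t - l - R * t ≤ R * sSup S := by
      have := mul_le_mul_of_nonneg_left h5 hR.le
      calc α t - l - R * t = R * ((α t - l) / R - t) := by field_simp
        _ ≤ R * sSup S := this
    linarith
  rw [div_le_iff₀ hR]
  linarith
end
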